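/- Define the sequence C(g,n) for nonnegative integers g, n by C(0,3) = 1, C(1,1) = 1, C(g,0) = 0 for all g, and for 2g + n > 2 by the recursion C(g,n+1) = ((n+1)·C(g-1,n+2) + Σ_stable C(g₁,n₁+1)·C(g₂,n₂+1)) · (D+1)^(D+1)/D^D + 2·C(g,n) · (2D+1)^(2D+1)/(27·(2D-2)^(2D-2)), where D = D(g,n+1) = 3g - 1 + 2n and the sum is over g₁+g₂ = g, n₁+n₂ = n with (gᵢ, nᵢ+1) ∉ {(0,1),(0,2)}. Then for all stable (g,n) with n ≥ 1, C(g,n) ≤ t · r^(-g) · s^(-n) · (5g - 5 + 3n)!, where s = (27/80)·e^(-3), r = (14·27/80²)·e^(-4), t = (3⁵/80²)·e^(-4). -/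

import Mathlib

/-!
Induction on `3g + 2n = D(g, n) + 3`, proving `0 ≤ C g n ≤ B g n` for
`B g n = t r⁻ᵍ s⁻ⁿ (5g - 5 + 3n)!`. The two ratio factors of the recursion are controlled by
`(1 + a/k)^k ≤ eᵃ`: `(D+1)^(D+1)/D^D ≤ e (D+1)` and
`(2D+1)^(2D+1) / (27 (2D-2)^(2D-2)) ≤ e³ (2D+1)³ / 27`. Against `B g (n+1)`, the genus-reduction
term then costs two factorial factors, the splitting terms cost five (using
`(a+3)! (b+3)! ≤ 3! (a+b+3)!` and that there are at most `(g+1)(n+1)` splittings), and the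
`C g n` term costs three. With the chosen `r`, `s`, `t` the three contributions are at most
`1/10`, `2/5` and `1/2` of `B g (n+1)`, which sum to `1`.
-/

open Real Finset
open scoped Nat

-- The reciprocals of the paper's `r` and `s`; `tConst` is its `t`.
noncomputable def rInv : ℝ := 80 ^ 2 / (14 * 27) * exp 1 ^ 4
noncomputable def sInv : ℝ := 80 / 27 * exp 1 ^ 3
noncomputable def tConst : ℝ := 3 ^ 5 / 80 ^ 2 / exp 1 ^ 4

noncomputable def bound (g m : ℕ) : ℝ := tConst * rInv ^ g * sInv ^ m * (5 * g + 3 * m - 5)!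

lemma constants_pos : 0 < tConst ∧ 0 < rInv ∧ 0 < sInv := by
  unfold tConst rInv sInv; exact ⟨by positivity, by positivity, by positivity⟩

lemma bound_nonneg (g m : ℕ) : 0 ≤ bound g m := by
  obtain ⟨_, _, _⟩ := constants_pos
  unfold bound; positivity

lemma rInv_eq : rInv = 40 / 7 * exp 1 * sInv := by unfold rInv sInv; ring
lemma exp_one_pow_three_eq : exp 1 ^ 3 = 27 / 80 * sInv := by unfold sInv; ring
lemma exp_one_mul_tConst_mul_sInv : exp 1 * tConst * sInv = 9 / 80 := by
  unfold tConst sInv; field_simp; ring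

lemma bound_eq_factorial {g m k : ℕ} (h : 5 * g + 3 * m = k + 5) :
    bound g m = tConst * rInv ^ g * sInv ^ m * k ! := by
  rw [bound, show 5 * g + 3 * m - 5 = k by omega]

lemma add_pow_add_div_pow_le_exp_mul (k a : ℕ) :
    ((k : ℝ) + a) ^ (k + a) / (k : ℝ) ^ k ≤ exp a * ((k : ℝ) + a) ^ a := by
  have hbase : (((k : ℝ) + a) / k) ^ k ≤ exp a := by
    rcases Nat.eq_zero_or_pos k with rfl | hk
    · simp
    · calc (((k : ℝ) + a) / k) ^ k = (1 - (-(a : ℝ)) / k) ^ k := by field_simp; ring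
        _ ≤ exp (-(-(a : ℝ))) :=
          one_sub_div_pow_le_exp_neg (by linarith [Nat.cast_nonneg (α := ℝ) a])
        _ = exp a := by rw [neg_neg]
  calc ((k : ℝ) + a) ^ (k + a) / (k : ℝ) ^ k
      = (((k : ℝ) + a) / k) ^ k * ((k : ℝ) + a) ^ a := by rw [pow_add, div_pow]; ring
    _ ≤ exp a * ((k : ℝ) + a) ^ a := by gcongr

lemma factorial_add_mul_factorial_add_le (a b k : ℕ) :
    (a + k)! * (b + k)! ≤ k ! * (a + b + k)! := by
  induction b with
  | zero => simp [mul_comm]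
  | succ b ih =>
    rw [show b + 1 + k = (b + k) + 1 by omega, show a + (b + 1) + k = (a + b + k) + 1 by omega,
      Nat.factorial_succ, Nat.factorial_succ]
    calc (a + k)! * ((b + k + 1) * (b + k)!) = (b + k + 1) * ((a + k)! * (b + k)!) := by ring
      _ ≤ (a + b + k + 1) * (k ! * (a + b + k)!) := by gcongr; omega
      _ = k ! * ((a + b + k + 1) * (a + b + k)!) := by ring

lemma bound_genus_reduction_le (s n : ℕ) :
    ((n : ℝ) + 1) * bound s (n + 2) * (exp 1 * (3 * s + 2 * n + 3)) ≤
      bound (s + 1) (n + 1) / 10 := by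
  obtain ⟨_, _, _⟩ := constants_pos
  have key : (7 : ℝ) * ((n + 1) * (3 * s + 2 * n + 3)) ≤
      4 * ((5 * s + 3 * n + 2) * (5 * s + 3 * n + 3)) := by
    have := Nat.cast_nonneg (α := ℝ) s; have := Nat.cast_nonneg (α := ℝ) n
    nlinarith
  have hfac : ((5 * s + 3 * n + 3)! : ℝ) =
      (5 * s + 3 * n + 2) * (5 * s + 3 * n + 3) * (5 * s + 3 * n + 1)! := by
    simp only [Nat.factorial_succ]; push_cast; ring
  rw [bound_eq_factorial (k := 5 * s + 3 * n + 1) (by omega),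
    bound_eq_factorial (k := 5 * s + 3 * n + 3) (by omega), hfac, pow_succ rInv]
  linear_combination
    (tConst * rInv ^ s * sInv ^ (n + 2) * ((5 * s + 3 * n + 1)! : ℝ) * exp 1 / 7) * key -
    (tConst * rInv ^ s * sInv ^ (n + 1) * (5 * s + 3 * n + 2) * (5 * s + 3 * n + 3) *
      ((5 * s + 3 * n + 1)! : ℝ) / 10) * rInv_eq

lemma bound_mul_bound_le {g₁ m₁ g₂ m₂ a b : ℕ} (h₁ : 5 * g₁ + 3 * m₁ = a + 8)
    (h₂ : 5 * g₂ + 3 * m₂ = b + 8) :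
    bound g₁ m₁ * bound g₂ m₂ ≤
      6 * tConst ^ 2 * rInv ^ (g₁ + g₂) * sInv ^ (m₁ + m₂) * (a + b + 3)! := by
  obtain ⟨_, _, _⟩ := constants_pos
  have hfac : ((a + 3)! * (b + 3)! : ℝ) ≤ 6 * (a + b + 3)! := by
    exact_mod_cast factorial_add_mul_factorial_add_le a b 3
  rw [bound_eq_factorial (k := a + 3) (by omega), bound_eq_factorial (k := b + 3) (by omega)]
  calc tConst * rInv ^ g₁ * sInv ^ m₁ * ((a + 3)! : ℝ) *
        (tConst * rInv ^ g₂ * sInv ^ m₂ * (b + 3)!)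
      = tConst ^ 2 * rInv ^ (g₁ + g₂) * sInv ^ (m₁ + m₂) * ((a + 3)! * (b + 3)! : ℝ) := by
        ring
    _ ≤ tConst ^ 2 * rInv ^ (g₁ + g₂) * sInv ^ (m₁ + m₂) * (6 * (a + b + 3)!) := by gcongr
    _ = _ := by ring

lemma bound_splitting_le {g n w : ℕ} (hw : 5 * g + 3 * n = w + 8) :
    ((g : ℝ) + 1) * (n + 1) * (6 * tConst ^ 2 * rInv ^ g * sInv ^ (n + 2) * (w + 1)!) *
      (exp 1 * (3 * g + 2 * n)) ≤ 2 / 5 * bound g (n + 1) := by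
  obtain ⟨_, _, _⟩ := constants_pos
  have key : (27 : ℝ) * ((g + 1) * (n + 1) * (3 * g + 2 * n)) ≤
      16 * ((w + 2) * (w + 3) * (w + 4) * (w + 5) * (w + 6)) := by
    have hw' : (5 * g + 3 * n : ℝ) = w + 8 := by exact_mod_cast hw
    have hg := Nat.cast_nonneg (α := ℝ) g; have hn := Nat.cast_nonneg (α := ℝ) n
    have hw0 := Nat.cast_nonneg (α := ℝ) w
    have h₁ : 15 * ((g + 1) * (n + 1) * (3 * g + 2 * n) : ℝ) ≤
        (w + 13) * (w + 11) * (w + 8) := by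
      calc 15 * ((g + 1) * (n + 1) * (3 * g + 2 * n) : ℝ)
          = (5 * (g + 1)) * (3 * (n + 1)) * (3 * g + 2 * n) := by ring
        _ ≤ (w + 13) * (w + 11) * (w + 8) := by gcongr ?_ * ?_ * ?_ <;> linarith
    have h₂ : (6 : ℝ) ≤ (w + 2) * (w + 3) := by nlinarith
    have h₃ : 0 ≤ ((w + 4) * (w + 5) * (w + 6) : ℝ) := by positivity
    nlinarith [mul_le_mul_of_nonneg_right h₂ h₃]
  have hfac : ((w + 6)! : ℝ) =
      (w + 2) * (w + 3) * (w + 4) * (w + 5) * (w + 6) * (w + 1)! := by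
    simp only [Nat.factorial_succ]; push_cast; ring
  rw [bound_eq_factorial (k := w + 6) (by omega), hfac]
  linear_combination (tConst * rInv ^ g * sInv ^ (n + 1) * ((w + 1)! : ℝ) / 40) * key +
    (6 * tConst * rInv ^ g * sInv ^ (n + 1) * ((w + 1)! : ℝ) *
      ((g + 1) * (n + 1) * (3 * g + 2 * n))) * exp_one_mul_tConst_mul_sInv

lemma bound_fewer_points_le {g n k : ℕ} (hk : 5 * g + 3 * n = k + 8) :
    2 * bound g n * (exp 1 ^ 3 * (6 * g + 4 * n - 1) ^ 3 / 27) ≤ bound g (n + 1) / 2 := by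
  obtain ⟨_, _, _⟩ := constants_pos
  have key : ((6 * g + 4 * n - 1 : ℝ)) ^ 3 ≤ 20 * ((k + 4) * (k + 5) * (k + 6)) := by
    have hk' : (5 * g + 3 * n : ℝ) = k + 8 := by exact_mod_cast hk
    have h₁ : (6 * g + 4 * n - 1 : ℝ) ≤ 2 * (k + 5) := by
      have : 5 ≤ 4 * g + 2 * n := by omega
      have : (5 : ℝ) ≤ 4 * g + 2 * n := by exact_mod_cast this
      linarith
    have h₀ : (0 : ℝ) ≤ 6 * g + 4 * n - 1 := by linarith [Nat.cast_nonneg (α := ℝ) k]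
    have := Nat.cast_nonneg (α := ℝ) k
    calc ((6 * g + 4 * n - 1 : ℝ)) ^ 3 ≤ (2 * (k + 5)) ^ 3 := by gcongr
      _ ≤ 20 * ((k + 4) * (k + 5) * (k + 6) : ℝ) := by nlinarith [pow_nonneg this 3]
  have hfac : ((k + 6)! : ℝ) = (k + 4) * (k + 5) * (k + 6) * (k + 3)! := by
    simp only [Nat.factorial_succ]; push_cast; ring
  rw [bound_eq_factorial (k := k + 3) (by omega), bound_eq_factorial (k := k + 6) (by omega),
    hfac, exp_one_pow_three_eq, pow_succ sInv]
  linear_combination (tConst * rInv ^ g * sInv ^ (n + 1) * ((k + 3)! : ℝ) / 40) * key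

def splittings (g n : ℕ) : Finset (ℕ × ℕ) :=
  ((Finset.range (g + 1)) ×ˢ (Finset.range (n + 1))).filter
    (fun p : ℕ × ℕ =>
      0 < 2 * (p.1 : ℤ) - 2 + (p.2 + 1) ∧ 0 < 2 * ((g : ℤ) - p.1) - 2 + ((n : ℤ) - p.2 + 1))

lemma card_splittings_le (g n : ℕ) : #(splittings g n) ≤ (g + 1) * (n + 1) :=
  (card_filter_le _ _).trans (by simp)

lemma stable_of_mem_splittings {g n : ℕ} {p : ℕ × ℕ} (hp : p ∈ splittings g n) :
    p.1 ≤ g ∧ p.2 ≤ n ∧ 3 ≤ 2 * p.1 + (p.2 + 1) ∧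
      3 ≤ 2 * (g - p.1) + (n - p.2 + 1) := by
  simp only [splittings, mem_filter, mem_product, mem_range] at hp
  omega

-- Verbatim the right-hand side of the recursion in `stmt_14`, so that its hypothesis applies as is.
noncomputable def recursionRHS (C : ℕ → ℕ → ℝ) (g n : ℕ) : ℝ :=
  (((n : ℝ) + 1) * (if g = 0 then 0 else C (g - 1) (n + 2)) +
      ∑ p ∈ splittings g n, C p.1 (p.2 + 1) * C (g - p.1) (n - p.2 + 1)) *
    (((3 * g + 2 * n - 1 : ℕ) : ℝ) + 1) ^ (3 * g + 2 * n - 1 + 1) /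
      ((3 * g + 2 * n - 1 : ℕ) : ℝ) ^ (3 * g + 2 * n - 1) +
  2 * C g n *
    (2 * ((3 * g + 2 * n - 1 : ℕ) : ℝ) + 1) ^ (2 * (3 * g + 2 * n - 1) + 1) /
      (27 * (2 * ((3 * g + 2 * n - 1 : ℕ) : ℝ) - 2) ^ (2 * (3 * g + 2 * n - 1) - 2))

def BoundedUpTo (C : ℕ → ℕ → ℝ) (N : ℕ) : Prop :=
  ∀ g m, 3 * g + 2 * m < N → 1 ≤ m → 3 ≤ 2 * g + m → 0 ≤ C g m ∧ C g m ≤ bound g m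

section Step

variable {C : ℕ → ℕ → ℝ} {g n : ℕ}

lemma genus_reduction_term_bounds (ih : BoundedUpTo C (3 * g + 2 * n + 2))
    (hgn : 3 ≤ 2 * g + n) :
    0 ≤ ((n : ℝ) + 1) * (if g = 0 then 0 else C (g - 1) (n + 2)) ∧
      ((n : ℝ) + 1) * (if g = 0 then 0 else C (g - 1) (n + 2)) * (exp 1 * (3 * g + 2 * n)) ≤
        bound g (n + 1) / 10 := by
  rcases g with _ | s
  · exact ⟨by simp, by simpa using div_nonneg (bound_nonneg 0 (n + 1)) (by norm_num)⟩
  obtain ⟨h₀, h⟩ := ih s (n + 2) (by omega) (by omega) (by omega)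
  simp only [Nat.add_one_ne_zero, if_false, Nat.add_sub_cancel]
  refine ⟨by positivity, le_trans ?_ (bound_genus_reduction_le s n)⟩
  push_cast
  calc ((n : ℝ) + 1) * C s (n + 2) * (exp 1 * (3 * (s + 1) + 2 * n))
      = ((n : ℝ) + 1) * C s (n + 2) * (exp 1 * (3 * s + 2 * n + 3)) := by ring
    _ ≤ _ := by gcongr

lemma splitting_term_bounds (ih : BoundedUpTo C (3 * g + 2 * n + 2)) (hgn : 3 ≤ 2 * g + n) :
    0 ≤ ∑ p ∈ splittings g n, C p.1 (p.2 + 1) * C (g - p.1) (n - p.2 + 1) ∧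
      (∑ p ∈ splittings g n, C p.1 (p.2 + 1) * C (g - p.1) (n - p.2 + 1)) *
        (exp 1 * (3 * g + 2 * n)) ≤ 2 / 5 * bound g (n + 1) := by
  obtain ⟨w, hw⟩ : ∃ w, 5 * g + 3 * n = w + 8 := ⟨5 * g + 3 * n - 8, by omega⟩
  set M := 6 * tConst ^ 2 * rInv ^ g * sInv ^ (n + 2) * ((w + 1)! : ℝ)
  have hterm : ∀ p ∈ splittings g n,
      0 ≤ C p.1 (p.2 + 1) * C (g - p.1) (n - p.2 + 1) ∧
        C p.1 (p.2 + 1) * C (g - p.1) (n - p.2 + 1) ≤ M := by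
    intro p hp
    obtain ⟨hg₁, hn₁, hs₁, hs₂⟩ := stable_of_mem_splittings hp
    obtain ⟨h₁, h₁'⟩ := ih p.1 (p.2 + 1) (by omega) (by omega) hs₁
    obtain ⟨h₂, h₂'⟩ := ih (g - p.1) (n - p.2 + 1) (by omega) (by omega) hs₂
    obtain ⟨a, ha⟩ : ∃ a, 5 * p.1 + 3 * (p.2 + 1) = a + 8 :=
      ⟨5 * p.1 + 3 * (p.2 + 1) - 8, by omega⟩
    obtain ⟨b, hb⟩ : ∃ b, 5 * (g - p.1) + 3 * (n - p.2 + 1) = b + 8 :=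
      ⟨5 * (g - p.1) + 3 * (n - p.2 + 1) - 8, by omega⟩
    refine ⟨mul_nonneg h₁ h₂, (mul_le_mul h₁' h₂' h₂ (bound_nonneg _ _)).trans ?_⟩
    calc _ ≤ _ := bound_mul_bound_le ha hb
      _ = M := by
        rw [show p.1 + (g - p.1) = g by omega, show p.2 + 1 + (n - p.2 + 1) = n + 2 by omega,
          show a + b + 3 = w + 1 by omega]
  have hM : 0 ≤ M := by obtain ⟨_, _, _⟩ := constants_pos; positivity
  have hsum : ∑ p ∈ splittings g n, C p.1 (p.2 + 1) * C (g - p.1) (n - p.2 + 1) ≤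
      ((g : ℝ) + 1) * (n + 1) * M :=
    calc _ ≤ #(splittings g n) • M := sum_le_card_nsmul _ _ _ fun p hp => (hterm p hp).2
      _ ≤ ((g : ℝ) + 1) * (n + 1) * M := by
        rw [nsmul_eq_mul]; gcongr; exact_mod_cast card_splittings_le g n
  refine ⟨sum_nonneg fun p hp => (hterm p hp).1, le_trans ?_ (bound_splitting_le hw)⟩
  gcongr

lemma fewer_points_term_bounds (h0 : ∀ g, C g 0 = 0) (ih : BoundedUpTo C (3 * g + 2 * n + 2))
    (hgn : 3 ≤ 2 * g + n) :
    0 ≤ C g n ∧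
      2 * C g n * (exp 1 ^ 3 * (6 * g + 4 * n - 1) ^ 3 / 27) ≤ bound g (n + 1) / 2 := by
  rcases Nat.eq_zero_or_pos n with rfl | hn
  · exact ⟨by simp [h0], by simpa [h0] using div_nonneg (bound_nonneg g 1) (by norm_num)⟩
  obtain ⟨h₀, h⟩ := ih g n (by omega) hn hgn
  obtain ⟨k, hk⟩ : ∃ k, 5 * g + 3 * n = k + 8 := ⟨5 * g + 3 * n - 8, by omega⟩
  have h₁ : (0 : ℝ) ≤ 6 * g + 4 * n - 1 := by
    have : (1 : ℝ) ≤ g + n := by exact_mod_cast (by omega : 1 ≤ g + n)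
    linarith [Nat.cast_nonneg (α := ℝ) g, Nat.cast_nonneg (α := ℝ) n]
  refine ⟨h₀, le_trans ?_ (bound_fewer_points_le hk)⟩
  gcongr

lemma recursionRHS_bounds (h0 : ∀ g, C g 0 = 0) (ih : BoundedUpTo C (3 * g + 2 * n + 2))
    (hgn : 3 ≤ 2 * g + n) :
    0 ≤ recursionRHS C g n ∧ recursionRHS C g n ≤ bound g (n + 1) := by
  obtain ⟨hA₀, hA⟩ := genus_reduction_term_bounds ih hgn
  obtain ⟨hS₀, hS⟩ := splitting_term_bounds ih hgn
  obtain ⟨hC₀, hC⟩ := fewer_points_term_bounds h0 ih hgn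
  obtain ⟨D, hD⟩ : ∃ D, 3 * g + 2 * n - 1 = D := ⟨_, rfl⟩
  have hD₁ : (D : ℝ) + 1 = 3 * g + 2 * n := by
    rw [← hD, Nat.cast_sub (by omega)]; push_cast; ring
  have hD₂ : 2 * (D : ℝ) - 2 = ((2 * D - 2 : ℕ) : ℝ) := by
    rw [Nat.cast_sub (by omega)]; push_cast; ring
  have hgrowth₁ : ((D : ℝ) + 1) ^ (D + 1) / (D : ℝ) ^ D ≤ exp 1 * (3 * g + 2 * n) := by
    simpa [hD₁] using add_pow_add_div_pow_le_exp_mul D 1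
  have hgrowth₂ :
      (2 * (D : ℝ) + 1) ^ (2 * D + 1) / (27 * ((2 * D - 2 : ℕ) : ℝ) ^ (2 * D - 2)) ≤
      exp 1 ^ 3 * (6 * g + 4 * n - 1) ^ 3 / 27 := by
    have h := add_pow_add_div_pow_le_exp_mul (2 * D - 2) 3
    have hbase : ((2 * D - 2 : ℕ) : ℝ) + ((3 : ℕ) : ℝ) = 2 * D + 1 := by
      rw [← hD₂]; push_cast; ring
    rw [show 2 * D - 2 + 3 = 2 * D + 1 by omega, hbase, ← exp_one_pow] at h
    calc _ = (2 * (D : ℝ) + 1) ^ (2 * D + 1) / ((2 * D - 2 : ℕ) : ℝ) ^ (2 * D - 2) / 27 := by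
          ring
      _ ≤ exp 1 ^ 3 * (2 * D + 1) ^ 3 / 27 := by gcongr
      _ = exp 1 ^ 3 * (6 * g + 4 * n - 1) ^ 3 / 27 := by
        rw [show (2 * D + 1 : ℝ) = 6 * g + 4 * n - 1 by linear_combination 2 * hD₁]
  rw [recursionRHS, hD, hD₂]
  constructor
  · positivity
  · calc _ = (((n : ℝ) + 1) * (if g = 0 then 0 else C (g - 1) (n + 2)) +
            ∑ p ∈ splittings g n, C p.1 (p.2 + 1) * C (g - p.1) (n - p.2 + 1)) *
            (((D : ℝ) + 1) ^ (D + 1) / (D : ℝ) ^ D) +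
          2 * C g n * ((2 * (D : ℝ) + 1) ^ (2 * D + 1) /
            (27 * ((2 * D - 2 : ℕ) : ℝ) ^ (2 * D - 2))) := by
          ring
      _ ≤ (((n : ℝ) + 1) * (if g = 0 then 0 else C (g - 1) (n + 2)) +
            ∑ p ∈ splittings g n, C p.1 (p.2 + 1) * C (g - p.1) (n - p.2 + 1)) *
            (exp 1 * (3 * g + 2 * n)) +
          2 * C g n * (exp 1 ^ 3 * (6 * g + 4 * n - 1) ^ 3 / 27) := by
          gcongr
      _ ≤ bound g (n + 1) := by linarith

end Step

lemma one_le_bound_zero_three : 1 ≤ bound 0 3 := by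
  have h : bound 0 3 = 640 / 27 * exp 1 ^ 5 := by
    rw [bound, tConst, sInv, show (5 * 0 + 3 * 3 - 5)! = 24 from rfl]; field_simp; ring
  rw [h]; nlinarith [one_le_pow₀ (n := 5) (one_le_exp zero_le_one)]

lemma one_le_bound_one_one : 1 ≤ bound 1 1 := by
  have h : bound 1 1 = 80 / 7 * exp 1 ^ 3 := by
    rw [bound, tConst, rInv, sInv, show (5 * 1 + 3 * 1 - 5)! = 6 from rfl]; field_simp; ring
  rw [h]; nlinarith [one_le_pow₀ (n := 3) (one_le_exp zero_le_one)]

theorem boundedUpTo_of_recursion {C : ℕ → ℕ → ℝ} (h03 : C 0 3 = 1) (h11 : C 1 1 = 1)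
    (h0 : ∀ g, C g 0 = 0) (hrec : ∀ g n, 2 < 2 * g + n → C g (n + 1) = recursionRHS C g n) :
    ∀ N, BoundedUpTo C N := by
  intro N
  induction N with
  | zero => intro g m hN; omega
  | succ N ih =>
    intro g m hN hm hst
    rcases Nat.lt_succ_iff_lt_or_eq.mp hN with hN | rfl
    · exact ih g m hN hm hst
    obtain ⟨n, rfl⟩ : ∃ n, m = n + 1 := ⟨m - 1, by omega⟩
    by_cases hgn : 3 ≤ 2 * g + n
    · rw [hrec g n (by omega)]
      exact recursionRHS_bounds h0 ih hgn
    · obtain ⟨rfl, rfl⟩ | ⟨rfl, rfl⟩ : (g = 0 ∧ n = 2) ∨ (g = 1 ∧ n = 0) := by omega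
      · exact ⟨by simp [h03], by simpa [h03] using one_le_bound_zero_three⟩
      · exact ⟨by simp [h11], by simpa [h11] using one_le_bound_one_one⟩

lemma bound_eq_zpow (g n : ℕ) :
    bound g n = ((3 ^ 5 / 80 ^ 2) * exp 1 ^ (-4 : ℤ)) *
      ((14 * 27 / 80 ^ 2) * exp 1 ^ (-4 : ℤ)) ^ (-(g : ℤ)) *
      ((27 / 80) * exp 1 ^ (-3 : ℤ)) ^ (-(n : ℤ)) * (5 * g + 3 * n - 5)! := by
  simp only [zpow_neg, zpow_natCast, zpow_ofNat, ← inv_pow, mul_inv, inv_inv]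
  rw [bound, tConst, rInv, sInv]
  ring

/-- Factorial bound on the sequence `C g n` defined by the topological-recursion
bound recursion.  Stability of `(g,n)` means `2g - 2 + n > 0`; `D = D(g,n+1) = 3g - 1 + 2n`;
the sum is over decompositions `g₁+g₂ = g`, `n₁+n₂ = n` (encoded by `(g₁,n₁)`) with both
`(gᵢ, nᵢ+1)` stable. -/
theorem stmt_14 (C : ℕ → ℕ → ℝ)
    (h03 : C 0 3 = 1) (h11 : C 1 1 = 1) (h0 : ∀ g, C g 0 = 0)
    (hrec : ∀ g n : ℕ, 2 < 2 * g + n →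
      C g (n + 1) =
        (((n : ℝ) + 1) * (if g = 0 then 0 else C (g - 1) (n + 2)) +
            ∑ p ∈ ((Finset.range (g + 1)) ×ˢ (Finset.range (n + 1))).filter
              (fun p : ℕ × ℕ =>
                0 < 2 * (p.1 : ℤ) - 2 + (p.2 + 1) ∧
                  0 < 2 * ((g : ℤ) - p.1) - 2 + ((n : ℤ) - p.2 + 1)),
              C p.1 (p.2 + 1) * C (g - p.1) (n - p.2 + 1)) *
          (((3 * g + 2 * n - 1 : ℕ) : ℝ) + 1) ^ (3 * g + 2 * n - 1 + 1) /
            ((3 * g + 2 * n - 1 : ℕ) : ℝ) ^ (3 * g + 2 * n - 1) +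
        2 * C g n *
          (2 * ((3 * g + 2 * n - 1 : ℕ) : ℝ) + 1) ^ (2 * (3 * g + 2 * n - 1) + 1) /
            (27 * (2 * ((3 * g + 2 * n - 1 : ℕ) : ℝ) - 2) ^ (2 * (3 * g + 2 * n - 1) - 2))) :
    ∀ g n : ℕ, 1 ≤ n → 0 < 2 * (g : ℤ) - 2 + n →
      C g n ≤
        ((3 ^ 5 / 80 ^ 2) * Real.exp 1 ^ (-4 : ℤ)) *
          ((14 * 27 / 80 ^ 2) * Real.exp 1 ^ (-4 : ℤ)) ^ (-(g : ℤ)) *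
          ((27 / 80) * Real.exp 1 ^ (-3 : ℤ)) ^ (-(n : ℤ)) *
          Nat.factorial (5 * g + 3 * n - 5) := by
  intro g n hn hstable
  rw [← bound_eq_zpow]
  exact (boundedUpTo_of_recursion h03 h11 h0 hrec _ g n (Nat.lt_succ_self _) hn (by omega)).2
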